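/- (Algebraic/pointwise form of the paper's Theorem 1.1(1).) Let V = ℝ^m carry a nondegenerate symmetric bilinear form ⟨·,·⟩ of signature (p,q), and let A be an algebraic curvature tensor on V. Suppose (r,s) is admissible and the characteristic polynomial of the higher order Jacobi operator J(π) is the same for all π ∈ Gr_{r,s}(V). Then for every admissible pair (r̄,s̄) with r̄+s̄ = r+s or r̄+s̄ = m−(r+s), the characteristic polynomial of J(π) is the same for all π ∈ Gr_{r̄,s̄}(V); i.e. if A is Osserman of type (r,s), then A is Osserman of type (r̄,s̄). -/

import Mathlib

/-!
For a unit vector `e ∈ π` and a unit vector `v ⊥ π` of the opposite sign, the hyperbolic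
rotations `e ↦ (e + a v) / √(a² - 1)`, `a > 1`, move `π` between `Gr_{r,s}` and
`Gr_{r∓1,s±1}`. Up to the factor `1 - a²`, the characteristic polynomial of the rotated `J(π)` is
polynomial in `a`, so its constancy for `a > 1` carries over to `a = 0`, i.e. to `J(π)`. Hence
all nondegenerate `π` of dimension `k = r + s` share one characteristic polynomial `c`.

Taking traces, `g(u, u) tr J(u)` is then the same for all unit vectors `u` orthogonal to a fixed
orthonormal set of size `k - 1`; inside the coordinate planes of an orthonormal basis this forces
the Ricci operator `J(V) = ∑ εᵢ J(eᵢ)` to be `λ • 1`. For `π` of dimension `m - k`,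
`J(π) = λ • 1 - J(π^⊥)`, whose characteristic polynomial is determined by `c`.
-/

/-- `π` is a nondegenerate subspace of signature `(r,s)` for the symmetric bilinear form `g`:
`g` restricted to `π` is nondegenerate, the maximal dimension of a negative definite subspace
of `π` is `r`, and the maximal dimension of a positive definite subspace of `π` is `s`. -/
def HasSignature {V : Type*} [AddCommGroup V] [Module ℝ V] (g : V → V → ℝ)
    (π : Submodule ℝ V) (r s : ℕ) : Prop :=
  (∀ z ∈ π, (∀ w ∈ π, g z w = 0) → z = 0) ∧
  (∃ W : Submodule ℝ V, W ≤ π ∧ Module.finrank ℝ W = r ∧ ∀ z ∈ W, z ≠ 0 → g z z < 0) ∧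
  (∀ W : Submodule ℝ V, W ≤ π → (∀ z ∈ W, z ≠ 0 → g z z < 0) → Module.finrank ℝ W ≤ r) ∧
  (∃ W : Submodule ℝ V, W ≤ π ∧ Module.finrank ℝ W = s ∧ ∀ z ∈ W, z ≠ 0 → 0 < g z z) ∧
  (∀ W : Submodule ℝ V, W ≤ π → (∀ z ∈ W, z ≠ 0 → 0 < g z z) → Module.finrank ℝ W ≤ s)

/-- `e` is a `g`-orthonormal basis of `π` with signs `ε i = g(e i, e i) = ±1`. -/
def IsOrthoBasis {V : Type*} [AddCommGroup V] [Module ℝ V] (g : V → V → ℝ)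
    (π : Submodule ℝ V) {n : ℕ} (e : Fin n → V) (ε : Fin n → ℝ) : Prop :=
  Submodule.span ℝ (Set.range e) = π ∧ (∀ i, ε i = 1 ∨ ε i = -1) ∧
    ∀ i j, g (e i) (e j) = if i = j then ε i else 0

open Module Polynomial Finset
open LinearMap (trace)

variable {V : Type*} [AddCommGroup V] [Module ℝ V]

noncomputable section Orthonormal

variable (g : V →ₗ[ℝ] V →ₗ[ℝ] ℝ)

structure IsOrthonormalSet (S : Finset V) : Prop where
  sq_eq : ∀ v ∈ S, g v v = 1 ∨ g v v = -1
  orthogonal : ∀ u ∈ S, ∀ v ∈ S, u ≠ v → g u v = 0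

def numNeg (S : Finset V) : ℕ := #{v ∈ S | g v v = -1}

def numPos (S : Finset V) : ℕ := #{v ∈ S | g v v = 1}

def orthProj (S : Finset V) (x : V) : V := ∑ v ∈ S, (g v v * g x v) • v

variable {g} {S T : Finset V}

lemma isOrthonormalSet_empty : IsOrthonormalSet g ∅ := ⟨by simp, by simp⟩

namespace IsOrthonormalSet

variable (hS : IsOrthonormalSet g S)
include hS

lemma mul_self_eq_one {v : V} (hv : v ∈ S) : g v v * g v v = 1 := by
  rcases hS.sq_eq v hv with h | h <;> rw [h] <;> norm_num

lemma apply_sum_smul (c : V → ℝ) {u : V} (hu : u ∈ S) :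
    g (∑ v ∈ S, c v • v) u = c u * g u u := by
  rw [map_sum, LinearMap.sum_apply, sum_eq_single_of_mem u hu fun v hv hvu => by
    rw [map_smul, LinearMap.smul_apply, hS.orthogonal v hv u hu hvu, smul_zero]]
  rw [map_smul, LinearMap.smul_apply, smul_eq_mul]

lemma apply_orthProj (x : V) {u : V} (hu : u ∈ S) : g (orthProj g S x) u = g x u := by
  rw [orthProj, hS.apply_sum_smul _ hu, mul_right_comm, hS.mul_self_eq_one hu, one_mul]

lemma apply_sub_orthProj (x : V) {u : V} (hu : u ∈ S) : g (x - orthProj g S x) u = 0 := by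
  rw [map_sub, LinearMap.sub_apply, hS.apply_orthProj x hu, sub_self]

lemma orthProj_eq_self {x : V} (hx : x ∈ Submodule.span ℝ (S : Set V)) : orthProj g S x = x := by
  obtain ⟨c, -, rfl⟩ := Submodule.mem_span_finset.mp hx
  refine sum_congr rfl fun v hv => ?_
  rw [hS.apply_sum_smul c hv, mul_left_comm, hS.mul_self_eq_one hv, mul_one]

lemma apply_self_eq (gsymm : ∀ x y, g x y = g y x) (x : V) :
    g x x = g (x - orthProj g S x) (x - orthProj g S x) + ∑ v ∈ S, g v v * g x v ^ 2 := by
  set y := x - orthProj g S x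
  have hy : ∀ z ∈ Submodule.span ℝ (S : Set V), g y z = 0 := by
    intro z hz
    rw [← hS.orthProj_eq_self hz, orthProj, map_sum]
    exact sum_eq_zero fun v hv => by rw [map_smul, hS.apply_sub_orthProj x hv, smul_zero]
  have hP : orthProj g S x ∈ Submodule.span ℝ (S : Set V) :=
    Submodule.sum_mem _ fun v hv => Submodule.smul_mem _ _ (Submodule.subset_span hv)
  have hPP : g (orthProj g S x) (orthProj g S x) = ∑ v ∈ S, g v v * g x v ^ 2 := by
    conv_lhs => rw [orthProj, map_sum]
    simp only [map_smul, smul_eq_mul]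
    refine sum_congr rfl fun v hv => ?_
    rw [hS.apply_sum_smul _ hv]
    linear_combination (g x v) ^ 2 * g v v * hS.mul_self_eq_one hv
  calc g x x = g (y + orthProj g S x) (y + orthProj g S x) := by rw [sub_add_cancel]
    _ = g y y + g y (orthProj g S x) + g (orthProj g S x) y
        + g (orthProj g S x) (orthProj g S x) := by
      simp only [map_add, LinearMap.add_apply]; ring
    _ = g y y + ∑ v ∈ S, g v v * g x v ^ 2 := by
      rw [gsymm (orthProj g S x) y, hy _ hP, hPP]; ring

lemma subset (hT : T ⊆ S) : IsOrthonormalSet g T :=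
  ⟨fun v hv => hS.sq_eq v (hT hv), fun u hu v hv => hS.orthogonal u (hT hu) v (hT hv)⟩

lemma neg : IsOrthonormalSet (-g) S where
  sq_eq v hv := by
    simp only [LinearMap.neg_apply, neg_eq_iff_eq_neg, neg_neg]
    exact (hS.sq_eq v hv).symm
  orthogonal u hu v hv huv := by simp [hS.orthogonal u hu v hv huv]

lemma numNeg_add_numPos : numNeg g S + numPos g S = #S := by
  rw [numNeg, numPos, ← card_filter_add_card_filter_not (s := S) (p := fun v => g v v = -1)]
  congr 2
  refine filter_congr fun v hv => ?_
  rcases hS.sq_eq v hv with h | h <;> norm_num [h]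

lemma linearIndepOn : LinearIndepOn ℝ id (S : Set V) := by
  refine linearIndepOn_finset_iff.mpr fun c hc u hu => ?_
  have := hS.apply_sum_smul c hu
  rw [show ∑ v ∈ S, c v • v = 0 from hc, map_zero, LinearMap.zero_apply] at this
  rcases hS.sq_eq u hu with h | h <;> rw [h] at this <;> linarith

lemma insert_of_orthogonal [DecidableEq V] (gsymm : ∀ x y, g x y = g y x) {w : V}
    (hw : g w w = 1 ∨ g w w = -1) (hwS : ∀ u ∈ S, g w u = 0) : IsOrthonormalSet g (insert w S) where
  sq_eq v hv := by
    rcases mem_insert.mp hv with rfl | hv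
    exacts [hw, hS.sq_eq v hv]
  orthogonal u hu v hv huv := by
    rcases mem_insert.mp hu with rfl | huS <;> rcases mem_insert.mp hv with rfl | hvS
    · exact absurd rfl huv
    · exact hwS v hvS
    · exact (gsymm _ _).trans (hwS u huS)
    · exact hS.orthogonal u huS v hvS huv

end IsOrthonormalSet

lemma orthProj_neg : orthProj (-g) S = orthProj g S := by
  ext x
  simp only [orthProj, LinearMap.neg_apply, neg_mul_neg]

lemma numPos_neg : numPos (-g) S = numNeg g S := by
  simp only [numPos, numNeg, LinearMap.neg_apply, neg_eq_iff_eq_neg]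

lemma notMem_of_forall_apply_eq_zero {w : V} (hw : g w w ≠ 0) (hwS : ∀ u ∈ S, g w u = 0) :
    w ∉ S :=
  fun h => hw (hwS w h)

end Orthonormal

section Signature

variable {g : V →ₗ[ℝ] V →ₗ[ℝ] ℝ} {S : Finset V}

namespace IsOrthonormalSet

variable (hS : IsOrthonormalSet g S) (gsymm : ∀ x y, g x y = g y x)
include hS gsymm

lemma finrank_le_numPos {W : Submodule ℝ V} (hW : ∀ z ∈ W, z ≠ 0 → 0 < g z z)
    (h : ∀ w ∈ W, g (w - orthProj g S w) (w - orthProj g S w) ≤ 0) :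
    finrank ℝ W ≤ numPos g S := by
  let P := {v ∈ S | g v v = 1}
  let φ : W →ₗ[ℝ] (P → ℝ) := LinearMap.pi fun v => g.flip v ∘ₗ W.subtype
  have hφ : Function.Injective φ := by
    refine (injective_iff_map_eq_zero φ).mpr fun w hw => ?_
    have hwv : ∀ v ∈ S, g v v = 1 → g w v = 0 := fun v hv h1 =>
      congrFun hw ⟨v, mem_filter.mpr ⟨hv, h1⟩⟩
    have hsum : ∑ v ∈ S, g v v * g w v ^ 2 ≤ 0 := sum_nonpos fun v hv => by
      rcases hS.sq_eq v hv with h1 | h1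
      · simp [hwv v hv h1]
      · rw [h1]; nlinarith [sq_nonneg (g w v)]
    have hww : g w w ≤ 0 := by linarith [hS.apply_self_eq gsymm (w : V), h w w.2]
    by_contra hne
    exact (hW w w.2 (by simpa using hne)).not_ge hww
  calc finrank ℝ W ≤ finrank ℝ (P → ℝ) := LinearMap.finrank_le_finrank_of_injective hφ
    _ = numPos g S := by simp [numPos, P]

lemma exists_posDef :
    ∃ W : Submodule ℝ V, W ≤ Submodule.span ℝ (S : Set V) ∧ finrank ℝ W = numPos g S ∧
      ∀ z ∈ W, z ≠ 0 → 0 < g z z := by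
  set P := {v ∈ S | g v v = 1}
  have hP : IsOrthonormalSet g P := hS.subset (filter_subset _ _)
  refine ⟨Submodule.span ℝ (P : Set V), Submodule.span_mono (coe_subset.mpr (filter_subset _ _)),
    finrank_span_finset_eq_card hP.linearIndepOn, fun z hz hz0 => ?_⟩
  have hzz := hP.apply_self_eq gsymm z
  rw [hP.orthProj_eq_self hz, sub_self, map_zero, zero_add] at hzz
  have hterm : ∀ v ∈ P, g v v * g z v ^ 2 = g z v ^ 2 := fun v hv => by
    rw [(mem_filter.mp hv).2, one_mul]
  rw [hzz, sum_congr rfl hterm]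
  refine lt_of_le_of_ne (sum_nonneg fun v _ => sq_nonneg _) fun h0 => hz0 ?_
  have hzv : ∀ v ∈ P, g z v = 0 := fun v hv => pow_eq_zero_iff two_ne_zero |>.mp
    ((sum_eq_zero_iff_of_nonneg fun v _ => sq_nonneg _).mp h0.symm v hv)
  rw [← hP.orthProj_eq_self hz]
  exact sum_eq_zero fun v hv => by rw [hzv v hv, mul_zero, zero_smul]

lemma hasSignature_span :
    HasSignature (fun z w => g z w) (Submodule.span ℝ (S : Set V)) (numNeg g S) (numPos g S) := by
  have gsymm' : ∀ x y, (-g) x y = (-g) y x := fun x y => by simp [gsymm x y]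
  have hspan : ∀ w ∈ Submodule.span ℝ (S : Set V),
      g (w - orthProj g S w) (w - orthProj g S w) = 0 := fun w hw => by
    rw [hS.orthProj_eq_self hw, sub_self, map_zero]
  refine ⟨fun z hz h0 => ?_, ?_, fun W hW hWneg => ?_, hS.exists_posDef gsymm,
    fun W hW hWpos => hS.finrank_le_numPos gsymm hWpos fun w hw => (hspan w (hW hw)).le⟩
  · rw [← hS.orthProj_eq_self hz]
    exact sum_eq_zero fun v hv => by
      rw [show g z v = 0 from h0 v (Submodule.subset_span hv), mul_zero, zero_smul]
  · obtain ⟨W, hW, hdim, hpos⟩ := hS.neg.exists_posDef gsymm'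
    rw [numPos_neg] at hdim
    exact ⟨W, hW, hdim, fun z hz hz0 => by simpa using hpos z hz hz0⟩
  · rw [← numPos_neg]
    refine hS.neg.finrank_le_numPos gsymm' (fun z hz hz0 => by simpa using hWneg z hz hz0)
      fun w hw => ?_
    simp [orthProj_neg, hS.orthProj_eq_self (hW hw)]

lemma exists_orthogonal_of_numPos_lt {W : Submodule ℝ V} (hW : ∀ z ∈ W, z ≠ 0 → 0 < g z z)
    (h : numPos g S < finrank ℝ W) : ∃ v, g v v = 1 ∧ ∀ u ∈ S, g v u = 0 := by
  obtain ⟨w, -, hpos⟩ : ∃ w ∈ W, 0 < g (w - orthProj g S w) (w - orthProj g S w) := by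
    by_contra! hle
    exact h.not_ge (hS.finrank_le_numPos gsymm hW hle)
  refine ⟨(√(g (w - orthProj g S w) (w - orthProj g S w)))⁻¹ • (w - orthProj g S w), ?_,
    fun u hu => ?_⟩
  · simp only [map_smul, LinearMap.smul_apply, smul_eq_mul, ← mul_assoc, ← mul_inv,
      Real.mul_self_sqrt hpos.le]
    exact inv_mul_cancel₀ hpos.ne'
  · rw [map_smul, LinearMap.smul_apply, hS.apply_sub_orthProj w hu, smul_zero]

lemma exists_orthogonal_of_numNeg_lt {W : Submodule ℝ V} (hW : ∀ z ∈ W, z ≠ 0 → g z z < 0)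
    (h : numNeg g S < finrank ℝ W) : ∃ v, g v v = -1 ∧ ∀ u ∈ S, g v u = 0 := by
  obtain ⟨v, hv, hvS⟩ := hS.neg.exists_orthogonal_of_numPos_lt
    (fun x y => by simp [gsymm x y]) (W := W) (fun z hz hz0 => by simpa using hW z hz hz0)
    (by rwa [numPos_neg])
  exact ⟨v, by simpa [neg_eq_iff_eq_neg] using hv, fun u hu => by simpa using hvS u hu⟩

variable {p q : ℕ} (hsig : HasSignature (fun z w => g z w) ⊤ p q)
include hsig

lemma numNeg_le : numNeg g S ≤ p := by
  obtain ⟨W, -, hdim, hneg⟩ := (hS.hasSignature_span gsymm).2.1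
  exact hdim ▸ hsig.2.2.1 W le_top hneg

lemma numPos_le : numPos g S ≤ q := by
  obtain ⟨W, -, hdim, hpos⟩ := (hS.hasSignature_span gsymm).2.2.2.1
  exact hdim ▸ hsig.2.2.2.2 W le_top hpos

lemma exists_insert [DecidableEq V] (h : #S < p + q) :
    ∃ v ∉ S, IsOrthonormalSet g (insert v S) := by
  have hv : ∃ v, (g v v = 1 ∨ g v v = -1) ∧ ∀ u ∈ S, g v u = 0 := by
    rcases lt_or_ge (numNeg g S) p with hp | hp
    · obtain ⟨W, -, hdim, hneg⟩ := hsig.2.1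
      obtain ⟨v, hv, hvS⟩ := hS.exists_orthogonal_of_numNeg_lt gsymm hneg (hdim ▸ hp)
      exact ⟨v, .inr hv, hvS⟩
    · obtain ⟨W, -, hdim, hpos⟩ := hsig.2.2.2.1
      have := hS.numNeg_add_numPos
      obtain ⟨v, hv, hvS⟩ := hS.exists_orthogonal_of_numPos_lt gsymm hpos (by omega)
      exact ⟨v, .inl hv, hvS⟩
  obtain ⟨v, hv, hvS⟩ := hv
  refine ⟨v, fun hvS' => ?_, hS.insert_of_orthogonal gsymm hv hvS⟩
  rcases hv with h1 | h1 <;> linarith [hvS v hvS']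

lemma exists_superset [DecidableEq V] :
    ∃ B, S ⊆ B ∧ IsOrthonormalSet g B ∧ #B = p + q := by
  obtain ⟨n, hn⟩ : ∃ n, n + #S = p + q := by
    have := hS.numNeg_add_numPos
    have := hS.numNeg_le gsymm hsig
    have := hS.numPos_le gsymm hsig
    exact ⟨p + q - #S, by omega⟩
  induction n generalizing S with
  | zero => exact ⟨S, subset_rfl, hS, by omega⟩
  | succ n ih =>
    obtain ⟨v, hvS, hv⟩ := hS.exists_insert gsymm hsig (by omega)
    obtain ⟨B, hB, hBon, hBcard⟩ := ih hv (by rw [card_insert_of_notMem hvS]; omega)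
    exact ⟨B, (subset_insert v S).trans hB, hBon, hBcard⟩

end IsOrthonormalSet

lemma exists_isOrthonormalSet_numNeg_numPos [DecidableEq V] (gsymm : ∀ x y, g x y = g y x)
    {p q r s : ℕ} (hsig : HasSignature (fun z w => g z w) ⊤ p q) (hr : r ≤ p) (hs : s ≤ q) :
    ∃ S, IsOrthonormalSet g S ∧ numNeg g S = r ∧ numPos g S = s := by
  obtain ⟨B, -, hB, hcard⟩ := isOrthonormalSet_empty.exists_superset gsymm hsig
  have := hB.numNeg_add_numPos
  have := hB.numNeg_le gsymm hsig
  have := hB.numPos_le gsymm hsig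
  obtain ⟨T₁, hT₁, hcard₁⟩ := exists_subset_card_eq (s := {v ∈ B | g v v = -1}) (n := r)
    (by rw [← numNeg]; omega)
  obtain ⟨T₂, hT₂, hcard₂⟩ := exists_subset_card_eq (s := {v ∈ B | g v v = 1}) (n := s)
    (by rw [← numPos]; omega)
  have hneg : ∀ v ∈ T₁, g v v = -1 := fun v hv => (mem_filter.mp (hT₁ hv)).2
  have hpos : ∀ v ∈ T₂, g v v = 1 := fun v hv => (mem_filter.mp (hT₂ hv)).2
  refine ⟨T₁ ∪ T₂, hB.subset (union_subset (hT₁.trans (filter_subset _ _))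
    (hT₂.trans (filter_subset _ _))), ?_, ?_⟩
  · rw [numNeg, filter_union, filter_true_of_mem hneg,
      filter_false_of_mem fun v hv h => by linarith [hpos v hv], union_empty, hcard₁]
  · rw [numPos, filter_union, filter_true_of_mem hpos,
      filter_false_of_mem fun v hv h => by linarith [hneg v hv], empty_union, hcard₂]

end Signature

lemma charpoly_eq_of_forall_one_lt [FiniteDimensional ℝ V] (B₀ B₁ B₂ : V →ₗ[ℝ] V) (c : ℝ[X])
    (h : ∀ a : ℝ, 1 < a → ((1 - a ^ 2)⁻¹ • (B₀ + a • B₁ + a ^ 2 • B₂)).charpoly = c) :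
    B₀.charpoly = c := by
  -- For fixed `x`, `det (x (1 - a²) - (B₀ + a B₁ + a² B₂))` is a polynomial `P` in `a`, equal
  -- to `(1 - a²)ⁿ c(x)` for all `a > 1`, hence for `a = 0`.
  refine Polynomial.funext fun x => ?_
  let b := Module.Free.chooseBasis ℝ V
  let M : (V →ₗ[ℝ] V) → Matrix _ _ ℝ[X] := fun L => (LinearMap.toMatrix b b L).map (C : ℝ →+* ℝ[X])
  let P : ℝ[X] := ((C x * (1 - X ^ 2)) • 1 - (M B₀ + (X : ℝ[X]) • M B₁ + (X : ℝ[X]) ^ 2 • M B₂)).det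
  have hP : ∀ a, P.eval a =
      LinearMap.det ((x * (1 - a ^ 2)) • 1 - (B₀ + a • B₁ + a ^ 2 • B₂)) := by
    intro a
    rw [← LinearMap.det_toMatrix b, ← Polynomial.coe_evalRingHom, RingHom.map_det]
    congr 1
    have hM : ∀ L, (M L).map (eval a) = LinearMap.toMatrix b b L := fun L => by
      simp [M, Matrix.map_map, Function.comp_def]
    simp [Matrix.map_sub, Matrix.map_add, Matrix.map_smul', hM, LinearMap.toMatrix_one]
  have hPeq : P = (1 - X ^ 2) ^ finrank ℝ V * C (c.eval x) := by
    refine Polynomial.eq_of_infinite_eval_eq _ _ ((Set.Ioi_infinite 1).mono fun a ha => ?_)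
    have ha' : (1 : ℝ) - a ^ 2 ≠ 0 := by nlinarith [Set.mem_Ioi.mp ha]
    simp only [Set.mem_ofPred_eq, eval_mul, eval_pow, eval_sub, eval_one, eval_X, eval_C]
    rw [hP, ← h a ha, LinearMap.eval_charpoly, ← LinearMap.det_smul, smul_sub,
      smul_inv_smul₀ ha', Algebra.algebraMap_eq_smul_one, smul_smul, mul_comm]
  have h0 := congrArg (eval 0) hPeq
  simp only [hP, eval_mul, eval_pow, eval_sub, eval_one, eval_X, eval_C] at h0
  simpa [LinearMap.eval_charpoly, Algebra.algebraMap_eq_smul_one] using h0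

lemma LinearMap.SeparatingLeft.end_ext {g : V →ₗ[ℝ] V →ₗ[ℝ] ℝ} (hg : g.SeparatingLeft)
    {L M : V →ₗ[ℝ] V} (h : ∀ y z, g (L y) z = g (M y) z) : L = M :=
  LinearMap.ext fun y => sub_eq_zero.mp <| hg _ fun z => by
    rw [map_sub, LinearMap.sub_apply, h, sub_self]

noncomputable section Jacobi

/-- `J(π)` for `π` spanned by the orthonormal set `S`; the sign `εᵢ` of `v ∈ S` is `g v v`. -/
def higherJacobi (g : V →ₗ[ℝ] V →ₗ[ℝ] ℝ) (J : V → V →ₗ[ℝ] V) (S : Finset V) : V →ₗ[ℝ] V :=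
  ∑ v ∈ S, g v v • J v

variable {g : V →ₗ[ℝ] V →ₗ[ℝ] ℝ} {A : V →ₗ[ℝ] V →ₗ[ℝ] V →ₗ[ℝ] V →ₗ[ℝ] ℝ}
  {J : V → V →ₗ[ℝ] V} {S : Finset V}

lemma higherJacobi_insert [DecidableEq V] {w : V} (hw : w ∉ S) :
    higherJacobi g J (insert w S) = g w w • J w + higherJacobi g J S :=
  sum_insert hw

lemma higherJacobi_eq_add_erase [DecidableEq V] {e : V} (he : e ∈ S) :
    higherJacobi g J S = g e e • J e + higherJacobi g J (S.erase e) :=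
  (add_sum_erase S _ he).symm

lemma higherJacobi_apply (hJ : ∀ x y z, g (J x y) z = A y x x z) (S : Finset V) (y w : V) :
    g (higherJacobi g J S y) w = ∑ v ∈ S, g v v * A y v v w := by
  simp only [higherJacobi, LinearMap.sum_apply, map_sum, LinearMap.smul_apply, map_smul,
    smul_eq_mul, hJ]

variable (hg : g.SeparatingLeft) (hJ : ∀ x y z, g (J x y) z = A y x x z)
include hg hJ

lemma jacobi_add_smul (x v : V) (a : ℝ) :
    J (x + a • v) = J x + a • (J (x + v) - J x - J v) + a ^ 2 • J v :=
  hg.end_ext fun y z => by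
    simp only [LinearMap.add_apply, LinearMap.sub_apply, LinearMap.smul_apply, map_add, map_sub,
      map_smul, smul_eq_mul, hJ]
    ring

lemma jacobi_smul (t : ℝ) (x : V) : J (t • x) = t ^ 2 • J x :=
  hg.end_ext fun y z => by
    simp only [LinearMap.smul_apply, map_smul, smul_eq_mul, hJ]
    ring

end Jacobi

section Flip

variable {g : V →ₗ[ℝ] V →ₗ[ℝ] ℝ} {A : V →ₗ[ℝ] V →ₗ[ℝ] V →ₗ[ℝ] V →ₗ[ℝ] ℝ}
  {J : V → V →ₗ[ℝ] V} {S : Finset V}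

lemma charpoly_higherJacobi_eq_of_flip [FiniteDimensional ℝ V] [DecidableEq V]
    (gsymm : ∀ x y, g x y = g y x) (hg : g.SeparatingLeft) (hJ : ∀ x y z, g (J x y) z = A y x x z)
    (hS : IsOrthonormalSet g S) {e v : V} (he : e ∈ S) (hv : g v v = -g e e)
    (hvS : ∀ u ∈ S, g v u = 0) {c : ℝ[X]}
    (h : ∀ w, g w w = -g e e → (∀ u ∈ S.erase e, g w u = 0) →
      (higherJacobi g J (insert w (S.erase e))).charpoly = c) :
    (higherJacobi g J S).charpoly = c := by
  -- `w = (e + a v) / √(a² - 1)` replaces `e`; the resulting operator is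
  -- `(1 - a²)⁻¹ • (B₀ + a B₁ + a² B₂)` with `B₀ = J(S)`.
  set σ := g e e
  set R := higherJacobi g J (S.erase e)
  rw [higherJacobi_eq_add_erase he]
  refine charpoly_eq_of_forall_one_lt _ (σ • (J (e + v) - J e - J v)) (σ • J v - R) c
    fun a ha => ?_
  have ha2 : 0 < a ^ 2 - 1 := by nlinarith
  set t := (√(a ^ 2 - 1))⁻¹
  have ht : t ^ 2 = (a ^ 2 - 1)⁻¹ := by rw [inv_pow, Real.sq_sqrt ha2.le]
  have ht' : t ^ 2 * (a ^ 2 - 1) = 1 := by rw [ht, inv_mul_cancel₀ ha2.ne']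
  have hσ : σ * σ = 1 := hS.mul_self_eq_one he
  have hev : g e v = 0 := (gsymm e v).trans (hvS e he)
  set w := t • (e + a • v)
  have hww : g w w = -σ := by
    simp only [w, map_smul, map_add, LinearMap.smul_apply, LinearMap.add_apply, smul_eq_mul, hev,
      gsymm v e, hv]
    linear_combination (-σ) * ht'
  have hwS : ∀ u ∈ S.erase e, g w u = 0 := fun u hu => by
    simp [w, hS.orthogonal e he u (mem_of_mem_erase hu) (ne_of_mem_erase hu).symm,
      hvS u (mem_of_mem_erase hu)]
  have hwS' : w ∉ S.erase e := notMem_of_forall_apply_eq_zero (by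
    rw [hww, neg_ne_zero]; exact left_ne_zero_of_mul_eq_one hσ) hwS
  rw [← h w hww hwS, higherJacobi_insert hwS', hww, jacobi_smul hg hJ, jacobi_add_smul hg hJ, ht]
  congr 1
  have hk : (1 - a ^ 2)⁻¹ * (1 - a ^ 2) = 1 := inv_mul_cancel₀ (by linarith)
  rw [show (a ^ 2 - 1)⁻¹ = -(1 - a ^ 2)⁻¹ by rw [← inv_neg, neg_sub]]
  linear_combination (norm := module) hk • R

end Flip

lemma card_filter_insert_erase_add {α : Type*} [DecidableEq α] {S : Finset α} (P : α → Prop)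
    [DecidablePred P] {e w : α} (he : e ∈ S) (hw : w ∉ S.erase e) :
    #{x ∈ insert w (S.erase e) | P x} + (if P e then 1 else 0) =
      #{x ∈ S | P x} + (if P w then 1 else 0) := by
  rw [card_filter, card_filter, sum_insert hw, ← add_sum_erase S _ he]
  ring

section Osserman

variable [FiniteDimensional ℝ V]

/-- Osserman of type `(r, s)`, with common characteristic polynomial `c`. -/
def IsOssermanWith (g : V →ₗ[ℝ] V →ₗ[ℝ] ℝ) (J : V → V →ₗ[ℝ] V) (r s : ℕ) (c : ℝ[X]) : Prop :=
  ∀ S, IsOrthonormalSet g S → numNeg g S = r → numPos g S = s →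
    (higherJacobi g J S).charpoly = c

variable [DecidableEq V] {g : V →ₗ[ℝ] V →ₗ[ℝ] ℝ}
  {A : V →ₗ[ℝ] V →ₗ[ℝ] V →ₗ[ℝ] V →ₗ[ℝ] ℝ} {J : V → V →ₗ[ℝ] V} {S : Finset V} {c : ℝ[X]}
  (gsymm : ∀ x y, g x y = g y x) (hg : g.SeparatingLeft)
  (hJ : ∀ x y z, g (J x y) z = A y x x z)
include gsymm hg hJ

/-- `hr` and `hs` say that flipping the sign of `e` turns the type of `S` into `(r, s)`. -/
lemma IsOssermanWith.charpoly_eq_of_flip {r s : ℕ} (hO : IsOssermanWith g J r s c)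
    (hS : IsOrthonormalSet g S) {e v : V} (he : e ∈ S) (hv : g v v = -g e e)
    (hvS : ∀ u ∈ S, g v u = 0)
    (hr : numNeg g S + (if g e e = 1 then 1 else 0) = r + (if g e e = -1 then 1 else 0))
    (hs : numPos g S + (if g e e = -1 then 1 else 0) = s + (if g e e = 1 then 1 else 0)) :
    (higherJacobi g J S).charpoly = c := by
  refine charpoly_higherJacobi_eq_of_flip gsymm hg hJ hS he hv hvS fun w hw hwS => ?_
  have hw' : w ∉ S.erase e := notMem_of_forall_apply_eq_zero (by
    rcases hS.sq_eq e he with h | h <;> rw [hw, h] <;> norm_num) hwS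
  have hneg := card_filter_insert_erase_add (fun x => g x x = -1) he hw'
  have hpos := card_filter_insert_erase_add (fun x => g x x = 1) he hw'
  refine hO _ ((hS.subset (erase_subset e S)).insert_of_orthogonal gsymm ?_ hwS) ?_ ?_ <;>
    rcases hS.sq_eq e he with h | h <;>
    simp only [numNeg, numPos, hw, h] at hneg hpos hr hs ⊢ <;> norm_num at hneg hpos hr hs ⊢ <;>
    omega

variable {p q : ℕ} (hsig : HasSignature (fun z w => g z w) ⊤ p q)
include hsig

lemma isOssermanWith_succ_left_iff {r s : ℕ} (hr : r < p) (hs : s < q) :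
    IsOssermanWith g J (r + 1) s c ↔ IsOssermanWith g J r (s + 1) c := by
  constructor
  · intro hO S hS hneg hpos
    obtain ⟨e, he⟩ := card_pos.mp (show 0 < numPos g S by omega)
    obtain ⟨he, hee⟩ := mem_filter.mp he
    obtain ⟨W, -, hdim, hW⟩ := hsig.2.1
    obtain ⟨v, hv, hvS⟩ := hS.exists_orthogonal_of_numNeg_lt gsymm hW (by omega)
    exact hO.charpoly_eq_of_flip gsymm hg hJ hS he (by rw [hv, hee]) hvS
      (by norm_num [hee]; omega) (by norm_num [hee]; omega)
  · intro hO S hS hneg hpos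
    obtain ⟨e, he⟩ := card_pos.mp (show 0 < numNeg g S by omega)
    obtain ⟨he, hee⟩ := mem_filter.mp he
    obtain ⟨W, -, hdim, hW⟩ := hsig.2.2.2.1
    obtain ⟨v, hv, hvS⟩ := hS.exists_orthogonal_of_numPos_lt gsymm hW (by omega)
    exact hO.charpoly_eq_of_flip gsymm hg hJ hS he (by rw [hv, hee]; norm_num) hvS
      (by norm_num [hee]; omega) (by norm_num [hee]; omega)

lemma isOssermanWith_add_left_iff {r s d : ℕ} (hr : r + d ≤ p) (hs : s + d ≤ q) :
    IsOssermanWith g J (r + d) s c ↔ IsOssermanWith g J r (s + d) c := by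
  induction d generalizing s with
  | zero => rfl
  | succ d ih =>
    rw [← add_assoc, isOssermanWith_succ_left_iff gsymm hg hJ hsig (by omega) (by omega),
      ih (by omega) (by omega), add_right_comm, add_assoc]

lemma isOssermanWith_iff_of_add_eq {r s r' s' : ℕ} (h : r + s = r' + s') (hr : r ≤ p)
    (hs : s ≤ q) (hr' : r' ≤ p) (hs' : s' ≤ q) :
    IsOssermanWith g J r s c ↔ IsOssermanWith g J r' s' c := by
  rcases le_total r r' with hle | hle
  · obtain ⟨d, rfl⟩ := Nat.exists_eq_add_of_le hle
    obtain rfl : s = s' + d := by omega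
    exact (isOssermanWith_add_left_iff gsymm hg hJ hsig hr' hs).symm
  · obtain ⟨d, rfl⟩ := Nat.exists_eq_add_of_le hle
    obtain rfl : s' = s + d := by omega
    exact isOssermanWith_add_left_iff gsymm hg hJ hsig hr hs'

lemma IsOssermanWith.charpoly_eq {r s : ℕ} (hO : IsOssermanWith g J r s c) (hr : r ≤ p)
    (hs : s ≤ q) (hS : IsOrthonormalSet g S) (hcard : #S = r + s) :
    (higherJacobi g J S).charpoly = c :=
  (isOssermanWith_iff_of_add_eq gsymm hg hJ hsig (by rw [hS.numNeg_add_numPos, hcard]) hr hs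
    (hS.numNeg_le gsymm hsig) (hS.numPos_le gsymm hsig)).mp hO S hS rfl rfl

end Osserman

lemma LinearMap.trace_eq_neg_charpoly_nextCoeff [FiniteDimensional ℝ V] (L : V →ₗ[ℝ] V) :
    trace ℝ V L = -L.charpoly.nextCoeff := by
  rw [LinearMap.trace_eq_matrix_trace ℝ (Module.Free.chooseBasis ℝ V),
    Matrix.trace_eq_neg_charpoly_nextCoeff, LinearMap.charpoly_def]

section Basis

variable [FiniteDimensional ℝ V] {g : V →ₗ[ℝ] V →ₗ[ℝ] ℝ} {B : Finset V}

namespace IsOrthonormalSet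

variable (hB : IsOrthonormalSet g B) (hcard : #B = finrank ℝ V)
include hB hcard

noncomputable def basis : Basis B ℝ V :=
  basisOfLinearIndependentOfCardEqFinrank' ((↑) : B → V) hB.linearIndepOn.linearIndependent
    (by simp [hcard])

lemma basis_apply (i : B) : hB.basis hcard i = i := by
  simp [basis]

lemma span_eq_top : Submodule.span ℝ (B : Set V) = ⊤ := by
  have := (hB.basis hcard).span_eq
  rwa [show ⇑(hB.basis hcard) = ((↑) : B → V) from funext (hB.basis_apply hcard),
    Subtype.range_coe_subtype, setOfPred_mem] at this

lemma orthProj_eq (x : V) : orthProj g B x = x :=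
  hB.orthProj_eq_self (by rw [hB.span_eq_top hcard]; trivial)

lemma basis_repr_apply (x : V) (i : B) : (hB.basis hcard).repr x i = g i i * g x i := by
  conv_lhs => rw [← hB.orthProj_eq hcard x, orthProj, ← sum_coe_sort B]
  simp_rw [← hB.basis_apply hcard]
  rw [Basis.repr_sum_self]

lemma trace_eq_sum (L : V →ₗ[ℝ] V) : trace ℝ V L = ∑ b ∈ B, g b b * g (L b) b := by
  classical
  rw [LinearMap.trace_eq_matrix_trace ℝ (hB.basis hcard), Matrix.trace, ← sum_coe_sort B]
  refine sum_congr rfl fun i _ => ?_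
  rw [Matrix.diag, LinearMap.toMatrix_apply, basis_repr_apply, basis_apply]

end IsOrthonormalSet

end Basis

section Ricci

variable [FiniteDimensional ℝ V] {g : V →ₗ[ℝ] V →ₗ[ℝ] ℝ}
  {A : V →ₗ[ℝ] V →ₗ[ℝ] V →ₗ[ℝ] V →ₗ[ℝ] ℝ} {J : V → V →ₗ[ℝ] V} {B B' : Finset V}
  (hA1 : ∀ x y z w, A x y z w = -A y x z w) (hA2 : ∀ x y z w, A x y z w = A z w x y)
  (hJ : ∀ x y z, g (J x y) z = A y x x z) (hB : IsOrthonormalSet g B) (hcard : #B = finrank ℝ V)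
include hA1 hA2 hJ hB hcard

/-- `J(B)` for an orthonormal basis `B` is the Ricci operator: it polarizes `u ↦ tr J(u)`, so it
does not depend on `B`. -/
lemma apply_higherJacobi_eq_trace (y w : V) :
    g (higherJacobi g J B y) w =
      (trace ℝ V (J (y + w)) - trace ℝ V (J y) - trace ℝ V (J w)) / 2 := by
  have key : ∀ b, A b (y + w) (y + w) b - A b y y b - A b w w b = 2 * A y b b w := fun b => by
    simp only [map_add, LinearMap.add_apply]
    rw [hA1 b y w b, hA2 y b w b, hA1 w b y b, hA2 b w y b]
    ring
  simp only [higherJacobi_apply hJ, hB.trace_eq_sum hcard, hJ, ← sum_sub_distrib, ← mul_sub, key,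
    sum_div]
  exact sum_congr rfl fun b _ => by ring

lemma higherJacobi_eq_of_card_eq_finrank (hg : g.SeparatingLeft) (hB' : IsOrthonormalSet g B')
    (hcard' : #B' = finrank ℝ V) : higherJacobi g J B = higherJacobi g J B' :=
  hg.end_ext fun y w => by
    rw [apply_higherJacobi_eq_trace hA1 hA2 hJ hB hcard,
      apply_higherJacobi_eq_trace hA1 hA2 hJ hB' hcard']

lemma apply_higherJacobi_comm (y w : V) :
    g (higherJacobi g J B y) w = g (higherJacobi g J B w) y := by
  rw [apply_higherJacobi_eq_trace hA1 hA2 hJ hB hcard,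
    apply_higherJacobi_eq_trace hA1 hA2 hJ hB hcard, add_comm]
  ring

lemma apply_higherJacobi_self (hg : g.SeparatingLeft) (u : V) :
    g (higherJacobi g J B u) u = trace ℝ V (J u) := by
  rw [apply_higherJacobi_eq_trace hA1 hA2 hJ hB hcard, ← two_smul ℝ u, jacobi_smul hg hJ,
    map_smul, smul_eq_mul]
  ring

end Ricci

namespace IsOrthonormalSet

variable [FiniteDimensional ℝ V] {g : V →ₗ[ℝ] V →ₗ[ℝ] ℝ} {B : Finset V}

lemma eq_smul_of_apply_self (hB : IsOrthonormalSet g B) (hcard : #B = finrank ℝ V)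
    {σ : V →ₗ[ℝ] V →ₗ[ℝ] ℝ} (hσ : ∀ x y, σ x y = σ y x) {b₀ : V} (hb₀ : b₀ ∈ B)
    (h : ∀ b ∈ B, ∀ b' ∈ B, b ≠ b' → ∀ u ∈ Submodule.span ℝ {b, b'},
      (g u u = 1 ∨ g u u = -1) → g u u * σ u u = g b b * σ b b) :
    σ = (g b₀ b₀ * σ b₀ b₀) • g := by
  set l := g b₀ b₀ * σ b₀ b₀
  have diag : ∀ b ∈ B, σ b b = l * g b b := by
    intro b hb
    have key : g b b * σ b b = l := by
      rcases eq_or_ne b₀ b with rfl | hne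
      · rfl
      · exact h b₀ hb₀ b hb hne b (Submodule.subset_span (by simp)) (hB.sq_eq b hb)
    rw [← key, mul_comm (g b b), mul_assoc, hB.mul_self_eq_one hb, mul_one]
  have off : ∀ b ∈ B, ∀ b' ∈ B, b ≠ b' → σ b b' = 0 := by
    -- test `h` on the unit vector `u = x b + b' / 2` of the same sign as `b`
    intro b hb b' hb' hne
    have hbb := hB.mul_self_eq_one hb
    have hpos : 0 < 1 - g b b * g b' b' / 4 := by
      rcases hB.sq_eq b hb with h1 | h1 <;> rcases hB.sq_eq b' hb' with h2 | h2 <;>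
        rw [h1, h2] <;> norm_num
    set x := √(1 - g b b * g b' b' / 4)
    have hx : x ^ 2 = 1 - g b b * g b' b' / 4 := Real.sq_sqrt hpos.le
    set u := x • b + (1 / 2 : ℝ) • b'
    have huu : g u u = g b b := by
      simp only [u, map_add, map_smul, LinearMap.add_apply, LinearMap.smul_apply, smul_eq_mul,
        hB.orthogonal b hb b' hb' hne, hB.orthogonal b' hb' b hb hne.symm]
      linear_combination g b b * hx - g b' b' / 4 * hbb
    have hσu : σ u u = x ^ 2 * σ b b + x * σ b b' + σ b' b' / 4 := by
      simp only [u, map_add, map_smul, LinearMap.add_apply, LinearMap.smul_apply, smul_eq_mul,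
        hσ b' b]
      ring
    have hu := h b hb b' hb' hne u (Submodule.mem_span_pair.mpr ⟨x, 1 / 2, rfl⟩)
      (huu ▸ hB.sq_eq b hb)
    rw [huu] at hu
    have hu' := mul_left_cancel₀ (left_ne_zero_of_mul_eq_one hbb) hu
    rw [hσu, diag b hb, diag b' hb', hx] at hu'
    have hxσ : x * σ b b' = 0 := by linear_combination hu' + l * g b' b' / 4 * hbb
    exact (mul_eq_zero.mp hxσ).resolve_left (Real.sqrt_pos.mpr hpos).ne'
  refine LinearMap.ext_basis (hB.basis hcard) (hB.basis hcard) fun i j => ?_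
  simp only [basis_apply, LinearMap.smul_apply, smul_eq_mul]
  rcases eq_or_ne i j with rfl | hij
  · exact diag i i.2
  · rw [off i i.2 j j.2 (Subtype.coe_ne_coe.mpr hij), hB.orthogonal i i.2 j j.2
      (Subtype.coe_ne_coe.mpr hij), mul_zero]

end IsOrthonormalSet

section Einstein

variable [FiniteDimensional ℝ V] [DecidableEq V] {g : V →ₗ[ℝ] V →ₗ[ℝ] ℝ}
  {A : V →ₗ[ℝ] V →ₗ[ℝ] V →ₗ[ℝ] V →ₗ[ℝ] ℝ} {J : V → V →ₗ[ℝ] V} {k : ℕ} {c : ℝ[X]}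
  (gsymm : ∀ x y, g x y = g y x)
  (hc : ∀ S, IsOrthonormalSet g S → #S = k → (higherJacobi g J S).charpoly = c)
include gsymm hc

lemma apply_self_mul_trace_jacobi_eq {T : Finset V} (hT : IsOrthonormalSet g T) (hTk : #T + 1 = k)
    {u : V} (hu : g u u = 1 ∨ g u u = -1) (huT : ∀ t ∈ T, g u t = 0) :
    g u u * trace ℝ V (J u) = -c.nextCoeff - trace ℝ V (higherJacobi g J T) := by
  have huT' : u ∉ T :=
    notMem_of_forall_apply_eq_zero (by rcases hu with h | h <;> rw [h] <;> norm_num) huT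
  rw [← hc _ (hT.insert_of_orthogonal gsymm hu huT) (by rw [card_insert_of_notMem huT', hTk]),
    ← LinearMap.trace_eq_neg_charpoly_nextCoeff, higherJacobi_insert huT', map_add, map_smul,
    smul_eq_mul]
  ring

lemma higherJacobi_eq_smul_one (hg : g.SeparatingLeft) (hA1 : ∀ x y z w, A x y z w = -A y x z w)
    (hA2 : ∀ x y z w, A x y z w = A z w x y) (hJ : ∀ x y z, g (J x y) z = A y x x z)
    (hk : 1 ≤ k) (hkV : k < finrank ℝ V) {B : Finset V} (hB : IsOrthonormalSet g B)
    (hcard : #B = finrank ℝ V) {b₀ : V} (hb₀ : b₀ ∈ B) :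
    higherJacobi g J B = (g b₀ b₀ * trace ℝ V (J b₀)) • 1 := by
  set σ := g ∘ₗ higherJacobi g J B
  have hσ : ∀ u, σ u u = trace ℝ V (J u) := apply_higherJacobi_self hA1 hA2 hJ hB hcard hg
  have hσeq : σ = (g b₀ b₀ * σ b₀ b₀) • g := by
    refine hB.eq_smul_of_apply_self hcard (apply_higherJacobi_comm hA1 hA2 hJ hB hcard) hb₀
      fun b hb b' hb' hne u hu hunit => ?_
    obtain ⟨T, hT, hTcard⟩ := exists_subset_card_eq (s := (B.erase b).erase b') (n := k - 1) (by
      rw [card_erase_of_mem (mem_erase.mpr ⟨hne.symm, hb'⟩), card_erase_of_mem hb, hcard]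
      omega)
    have hTB : T ⊆ B := hT.trans ((erase_subset _ _).trans (erase_subset _ _))
    have horth : ∀ z ∈ Submodule.span ℝ {b, b'}, ∀ t ∈ T, g z t = 0 := by
      intro z hz t ht
      have htb : b ≠ t := fun h => by simpa [h] using hT ht
      have htb' : b' ≠ t := fun h => by simpa [h] using hT ht
      obtain ⟨x, y, rfl⟩ := Submodule.mem_span_pair.mp hz
      simp [hB.orthogonal b hb t (hTB ht) htb, hB.orthogonal b' hb' t (hTB ht) htb']
    rw [hσ, hσ, apply_self_mul_trace_jacobi_eq gsymm hc (hB.subset hTB) (by omega) hunit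
      (horth u hu), apply_self_mul_trace_jacobi_eq gsymm hc (hB.subset hTB) (by omega)
      (hB.sq_eq b hb) (horth b (Submodule.subset_span (by simp)))]
  refine hg.end_ext fun y w => ?_
  have := congrArg (fun s => s y w) hσeq
  rw [hσ] at this
  simpa [σ] using this

lemma exists_forall_higherJacobi_eq_smul_one (hg : g.SeparatingLeft)
    (hA1 : ∀ x y z w, A x y z w = -A y x z w) (hA2 : ∀ x y z w, A x y z w = A z w x y)
    (hJ : ∀ x y z, g (J x y) z = A y x x z) {p q : ℕ}
    (hsig : HasSignature (fun z w => g z w) ⊤ p q) (hpq : p + q = finrank ℝ V)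
    (hk : 1 ≤ k) (hkV : k < finrank ℝ V) :
    ∃ l : ℝ, ∀ B, IsOrthonormalSet g B → #B = finrank ℝ V → higherJacobi g J B = l • 1 := by
  obtain ⟨B₀, -, hB₀, hcard₀⟩ := isOrthonormalSet_empty.exists_superset gsymm hsig
  rw [hpq] at hcard₀
  obtain ⟨b₀, hb₀⟩ := card_pos.mp (show 0 < #B₀ by omega)
  exact ⟨_, fun B hB hcard => (higherJacobi_eq_of_card_eq_finrank hA1 hA2 hJ hB hcard hg hB₀
    hcard₀).trans (higherJacobi_eq_smul_one gsymm hc hg hA1 hA2 hJ hk hkV hB₀ hcard₀ hb₀)⟩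

end Einstein

section Complement

variable [FiniteDimensional ℝ V]

lemma eval_charpoly_smul_one_sub (L : V →ₗ[ℝ] V) (l x : ℝ) :
    (l • 1 - L).charpoly.eval x = (-1) ^ finrank ℝ V * L.charpoly.eval (l - x) := by
  rw [LinearMap.eval_charpoly, LinearMap.eval_charpoly, ← LinearMap.det_smul,
    Algebra.algebraMap_eq_smul_one, Algebra.algebraMap_eq_smul_one]
  congr 1
  module

lemma charpoly_smul_one_sub_congr {L L' : V →ₗ[ℝ] V} (h : L.charpoly = L'.charpoly) (l : ℝ) :
    (l • 1 - L).charpoly = (l • 1 - L').charpoly :=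
  Polynomial.funext fun x => by rw [eval_charpoly_smul_one_sub, eval_charpoly_smul_one_sub, h]

variable [DecidableEq V] {g : V →ₗ[ℝ] V →ₗ[ℝ] ℝ} {J : V → V →ₗ[ℝ] V} {p q k : ℕ} {c : ℝ[X]}
  {l : ℝ} {S : Finset V}

lemma exists_higherJacobi_eq_smul_one_sub (gsymm : ∀ x y, g x y = g y x)
    (hsig : HasSignature (fun z w => g z w) ⊤ p q) (hpq : p + q = finrank ℝ V)
    (hc : ∀ T, IsOrthonormalSet g T → #T = k → (higherJacobi g J T).charpoly = c)
    (hl : ∀ B, IsOrthonormalSet g B → #B = finrank ℝ V → higherJacobi g J B = l • 1)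
    (hS : IsOrthonormalSet g S) (hcard : #S + k = finrank ℝ V) :
    ∃ L : V →ₗ[ℝ] V, L.charpoly = c ∧ higherJacobi g J S = l • 1 - L := by
  obtain ⟨B, hSB, hB, hBcard⟩ := hS.exists_superset gsymm hsig
  refine ⟨higherJacobi g J (B \ S), hc _ (hB.subset sdiff_subset) ?_, ?_⟩
  · rw [card_sdiff_of_subset hSB]
    omega
  · rw [← hl B hB (hBcard.trans hpq), higherJacobi, higherJacobi, higherJacobi, ← sum_sdiff hSB,
      add_sub_cancel_left]

end Complement

section Frames

variable {g : V →ₗ[ℝ] V →ₗ[ℝ] ℝ} {J : V → V →ₗ[ℝ] V} {π : Submodule ℝ V} {n : ℕ}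
  {e : Fin n → V} {ε : Fin n → ℝ}

namespace IsOrthoBasis

variable (h : IsOrthoBasis (fun z w => g z w) π e ε)
include h

lemma apply_self (i : Fin n) : g (e i) (e i) = ε i := by
  simpa using h.2.2 i i

lemma injective : Function.Injective e := fun i j hij => by
  by_contra hne
  have : g (e i) (e j) = if i = j then ε i else 0 := h.2.2 i j
  rw [if_neg hne, hij, h.apply_self] at this
  rcases h.2.1 j with h1 | h1 <;> simp [h1] at this

variable [DecidableEq V]

lemma isOrthonormalSet_image : IsOrthonormalSet g (univ.image e) where
  sq_eq := by
    simpa [h.apply_self] using h.2.1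
  orthogonal := by
    simp only [mem_image, mem_univ, true_and, forall_exists_index, forall_apply_eq_imp_iff]
    intro i j hne
    simpa [ne_of_apply_ne e hne] using h.2.2 i j

lemma card_image : #(univ.image e) = n := by
  rw [card_image_of_injective _ h.injective, card_fin]

lemma sum_eq_higherJacobi : ∑ i, ε i • J (e i) = higherJacobi g J (univ.image e) := by
  rw [higherJacobi, sum_image fun i _ j _ hij => h.injective hij]
  simp [h.apply_self]

end IsOrthoBasis

lemma IsOrthonormalSet.exists_isOrthoBasis {S : Finset V} (hS : IsOrthonormalSet g S)
    (hcard : #S = n) :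
    ∃ (e : Fin n → V) (ε : Fin n → ℝ), IsOrthoBasis (fun z w => g z w)
      (Submodule.span ℝ (S : Set V)) e ε ∧ ∑ i, ε i • J (e i) = higherJacobi g J S := by
  set f := (S.equivFinOfCardEq hcard).symm
  refine ⟨fun i => f i, fun i => g (f i) (f i),
    ⟨?_, fun i => hS.sq_eq _ (f i).2, fun i j => ?_⟩, ?_⟩
  · rw [Set.range_comp' ((↑) : S → V) f, f.range_eq_univ, Set.image_univ, Subtype.range_coe]
  · split_ifs with hij
    · rw [hij]
    · exact hS.orthogonal _ (f i).2 _ (f j).2 fun h => hij (f.injective (Subtype.ext h))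
  · rw [higherJacobi, ← sum_coe_sort S]
    exact f.sum_comp fun v : S => g v v • J v

lemma isOssermanWith_of_forall_charpoly_eq [FiniteDimensional ℝ V]
    (gsymm : ∀ x y, g x y = g y x) {r s : ℕ}
    (hOss : ∀ (π π' : Submodule ℝ V) (e e' : Fin (r + s) → V) (ε ε' : Fin (r + s) → ℝ),
      HasSignature (fun z w => g z w) π r s → IsOrthoBasis (fun z w => g z w) π e ε →
      HasSignature (fun z w => g z w) π' r s → IsOrthoBasis (fun z w => g z w) π' e' ε' →
      (∑ i, ε i • J (e i)).charpoly = (∑ i, ε' i • J (e' i)).charpoly)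
    {S₀ : Finset V} (hS₀ : IsOrthonormalSet g S₀) (hneg₀ : numNeg g S₀ = r)
    (hpos₀ : numPos g S₀ = s) :
    IsOssermanWith g J r s (higherJacobi g J S₀).charpoly := by
  have frame : ∀ S, IsOrthonormalSet g S → numNeg g S = r → numPos g S = s →
      ∃ (e : Fin (r + s) → V) (ε : Fin (r + s) → ℝ),
        HasSignature (fun z w => g z w) (Submodule.span ℝ (S : Set V)) r s ∧
        IsOrthoBasis (fun z w => g z w) (Submodule.span ℝ (S : Set V)) e ε ∧
        ∑ i, ε i • J (e i) = higherJacobi g J S := by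
    intro S hS hneg hpos
    obtain ⟨e, ε, hob, hsum⟩ :=
      hS.exists_isOrthoBasis (J := J) (by rw [← hS.numNeg_add_numPos, hneg, hpos])
    exact ⟨e, ε, hneg ▸ hpos ▸ hS.hasSignature_span gsymm, hob, hsum⟩
  intro S hS hneg hpos
  obtain ⟨e, ε, hsig, hob, hsum⟩ := frame S hS hneg hpos
  obtain ⟨e₀, ε₀, hsig₀, hob₀, hsum₀⟩ := frame S₀ hS₀ hneg₀ hpos₀
  rw [← hsum, ← hsum₀]
  exact hOss _ _ _ _ _ _ hsig hob hsig₀ hob₀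

end Frames


theorem stmt18_general (m p q : ℕ) (hpq : p + q = m)
    (g : (Fin m → ℝ) →ₗ[ℝ] (Fin m → ℝ) →ₗ[ℝ] ℝ)
    (gsymm : ∀ z w, g z w = g w z)
    (gsig : HasSignature (fun z w => g z w) (⊤ : Submodule ℝ (Fin m → ℝ)) p q)
    (A : (Fin m → ℝ) →ₗ[ℝ] (Fin m → ℝ) →ₗ[ℝ] (Fin m → ℝ) →ₗ[ℝ] (Fin m → ℝ) →ₗ[ℝ] ℝ)
    (hA1 : ∀ x y z w, A x y z w = - A y x z w)
    (hA2 : ∀ x y z w, A x y z w = A z w x y)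
    (J : (Fin m → ℝ) → ((Fin m → ℝ) →ₗ[ℝ] (Fin m → ℝ)))
    (hJ : ∀ x y z, g (J x y) z = A y x x z)
    (r s : ℕ) (hr : r ≤ p) (hs : s ≤ q)
    (hOss : ∀ (π π' : Submodule ℝ (Fin m → ℝ)) (e e' : Fin (r + s) → (Fin m → ℝ))
      (ε ε' : Fin (r + s) → ℝ),
      HasSignature (fun z w => g z w) π r s → IsOrthoBasis (fun z w => g z w) π e ε →
      HasSignature (fun z w => g z w) π' r s → IsOrthoBasis (fun z w => g z w) π' e' ε' →
      (∑ i, ε i • J (e i)).charpoly = (∑ i, ε' i • J (e' i)).charpoly) :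
    ∀ rb sb : ℕ, rb ≤ p → sb ≤ q → 1 ≤ rb + sb → rb + sb ≤ m - 1 →
      (rb + sb = r + s ∨ rb + sb = m - (r + s)) →
      ∀ (π π' : Submodule ℝ (Fin m → ℝ)) (e e' : Fin (rb + sb) → (Fin m → ℝ))
        (ε ε' : Fin (rb + sb) → ℝ),
        HasSignature (fun z w => g z w) π rb sb → IsOrthoBasis (fun z w => g z w) π e ε →
        HasSignature (fun z w => g z w) π' rb sb →
        IsOrthoBasis (fun z w => g z w) π' e' ε' →
        (∑ i, ε i • J (e i)).charpoly = (∑ i, ε' i • J (e' i)).charpoly := by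
  classical
  intro rb sb _ _ hk₁ hk₂ hk π π' e e' ε ε' _ hob _ hob'
  have hg : g.SeparatingLeft := fun z hz => gsig.1 z trivial fun w _ => hz w
  have hm : finrank ℝ (Fin m → ℝ) = m := finrank_fin_fun ℝ
  have hdim : p + q = finrank ℝ (Fin m → ℝ) := hpq.trans hm.symm
  obtain ⟨S₀, hS₀, hneg₀, hpos₀⟩ := exists_isOrthonormalSet_numNeg_numPos gsymm gsig hr hs
  have hc := fun S (hS : IsOrthonormalSet g S) (hcard : #S = r + s) =>
    (isOssermanWith_of_forall_charpoly_eq gsymm hOss hS₀ hneg₀ hpos₀).charpoly_eq gsymm hg hJ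
      gsig hr hs hS hcard
  rw [hob.sum_eq_higherJacobi, hob'.sum_eq_higherJacobi]
  rcases hk with hk | hk
  · rw [hc _ hob.isOrthonormalSet_image (hob.card_image.trans hk),
      hc _ hob'.isOrthonormalSet_image (hob'.card_image.trans hk)]
  · obtain ⟨l, hl⟩ := exists_forall_higherJacobi_eq_smul_one gsymm hc hg hA1 hA2 hJ gsig hdim
      (by omega) (by rw [hm]; omega)
    obtain ⟨L, hL, hJL⟩ := exists_higherJacobi_eq_smul_one_sub gsymm gsig hdim hc hl
      hob.isOrthonormalSet_image (by rw [hob.card_image, hm]; omega)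
    obtain ⟨L', hL', hJL'⟩ := exists_higherJacobi_eq_smul_one_sub gsymm gsig hdim hc hl
      hob'.isOrthonormalSet_image (by rw [hob'.card_image, hm]; omega)
    rw [hJL, hJL']
    exact charpoly_smul_one_sub_congr (hL.trans hL'.symm) l

/-- (Algebraic form of Theorem 1.1(1).) Let `V = ℝ^m` carry a nondegenerate
symmetric bilinear form `g` of signature `(p,q)` and let `A` be an algebraic curvature tensor
with Jacobi operator `J`. If `(r,s)` is admissible and the characteristic polynomial of the
higher order Jacobi operator `J(π) = Σ εᵢ J(eᵢ)` is the same for all `π ∈ Gr_{r,s}(V)`, then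
for every admissible `(r̄,s̄)` with `r̄+s̄ = r+s` or `r̄+s̄ = m-(r+s)` the characteristic
polynomial of `J(π)` is the same for all `π ∈ Gr_{r̄,s̄}(V)`. -/
theorem stmt18 (m p q : ℕ) (hpq : p + q = m)
    (g : (Fin m → ℝ) →ₗ[ℝ] (Fin m → ℝ) →ₗ[ℝ] ℝ)
    (gsymm : ∀ z w, g z w = g w z)
    (gsig : HasSignature (fun z w => g z w) (⊤ : Submodule ℝ (Fin m → ℝ)) p q)
    (A : (Fin m → ℝ) →ₗ[ℝ] (Fin m → ℝ) →ₗ[ℝ] (Fin m → ℝ) →ₗ[ℝ] (Fin m → ℝ) →ₗ[ℝ] ℝ)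
    (hA1 : ∀ x y z w, A x y z w = - A y x z w)
    (hA2 : ∀ x y z w, A x y z w = A z w x y)
    (hA3 : ∀ x y z w, A x y z w + A y z x w + A z x y w = 0)
    (J : (Fin m → ℝ) → ((Fin m → ℝ) →ₗ[ℝ] (Fin m → ℝ)))
    (hJ : ∀ x y z, g (J x y) z = A y x x z)
    (r s : ℕ) (hr : r ≤ p) (hs : s ≤ q) (hrs1 : 1 ≤ r + s) (hrs2 : r + s ≤ m - 1)
    (hOss : ∀ (π π' : Submodule ℝ (Fin m → ℝ)) (e e' : Fin (r + s) → (Fin m → ℝ))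
      (ε ε' : Fin (r + s) → ℝ),
      HasSignature (fun z w => g z w) π r s → IsOrthoBasis (fun z w => g z w) π e ε →
      HasSignature (fun z w => g z w) π' r s → IsOrthoBasis (fun z w => g z w) π' e' ε' →
      (∑ i, ε i • J (e i)).charpoly = (∑ i, ε' i • J (e' i)).charpoly) :
    ∀ rb sb : ℕ, rb ≤ p → sb ≤ q → 1 ≤ rb + sb → rb + sb ≤ m - 1 →
      (rb + sb = r + s ∨ rb + sb = m - (r + s)) →
      ∀ (π π' : Submodule ℝ (Fin m → ℝ)) (e e' : Fin (rb + sb) → (Fin m → ℝ))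
        (ε ε' : Fin (rb + sb) → ℝ),
        HasSignature (fun z w => g z w) π rb sb → IsOrthoBasis (fun z w => g z w) π e ε →
        HasSignature (fun z w => g z w) π' rb sb →
        IsOrthoBasis (fun z w => g z w) π' e' ε' →
        (∑ i, ε i • J (e i)).charpoly = (∑ i, ε' i • J (e' i)).charpoly :=
  stmt18_general m p q hpq g gsymm gsig A hA1 hA2 J hJ r s hr hs hOss
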